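/- arXiv:2203.13142 — 3 statements merged into one kernel-verified Lean document; each statement's English description precedes it below -/
import Mathlib

section
/- For every natural number k and integer m, the product of binomial coefficients C(−1/2, k) · C(m + k − 1/2, 2k) equals ((1/2)^{(k)} · (m + 1/2)^{(k)} · (1/2 − m)^{(k)}) / ((2k)! · k!), where C(x, n) denotes the generalized binomial coefficient with real upper argument and (a)^{(n)} denotes the rising factorial. -/
/-- The generalized binomial coefficient `C(x, n) = x(x−1)⋯(x−n+1)/n!`. -/
def genBinomQ (x : ℚ) (n : ℕ) : ℚ :=
  (∏ i ∈ Finset.range n, (x - i)) / n.factorial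

lemma ascPochhammer_eval_eq_prod_range (x : ℚ) (n : ℕ) :
    (ascPochhammer ℚ n).eval x = ∏ i ∈ Finset.range n, (x + i) := by
  induction n with
  | zero => simp
  | succ n ih => rw [ascPochhammer_succ_eval, Finset.prod_range_succ, ih]

/-- For every natural number `k` and integer `m`,
`C(−1/2, k) · C(m + k − 1/2, 2k)
  = ((1/2)^{(k)} (m + 1/2)^{(k)} (1/2 − m)^{(k)}) / ((2k)! · k!)`. -/
theorem genBinom_neg_half_mul_genBinom (k : ℕ) (m : ℤ) :
    genBinomQ (-(1 / 2)) k * genBinomQ ((m : ℚ) + k - 1 / 2) (2 * k)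
      = ((ascPochhammer ℚ k).eval (1 / 2) * (ascPochhammer ℚ k).eval ((m : ℚ) + 1 / 2)
          * (ascPochhammer ℚ k).eval (1 / 2 - (m : ℚ)))
        / (((2 * k).factorial : ℚ) * (k.factorial : ℚ)) := by
  unfold genBinomQ
  rw [ascPochhammer_eval_eq_prod_range, ascPochhammer_eval_eq_prod_range,
    ascPochhammer_eval_eq_prod_range, two_mul, Finset.prod_range_add]
  have e1 : ∏ i ∈ Finset.range k, ((m : ℚ) + 1 / 2 + i)
      = ∏ i ∈ Finset.range k, ((m : ℚ) + k - 1 / 2 - i) := by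
    rw [← Finset.prod_range_reflect (fun i => (m : ℚ) + 1 / 2 + i)]
    apply Finset.prod_congr rfl
    intro i hi
    have hik : i < k := Finset.mem_range.mp hi
    have hc : ((k - 1 - i : ℕ) : ℚ) = (k : ℚ) - 1 - i := by
      rw [Nat.sub_sub, Nat.cast_sub (by omega)]
      push_cast
      ring
    simp only [hc]
    ring
  have e2 : (∏ i ∈ Finset.range k, (-(1 / 2 : ℚ) - i))
        * ∏ i ∈ Finset.range k, ((m : ℚ) + k - 1 / 2 - (k + i : ℕ))
      = (∏ i ∈ Finset.range k, (1 / 2 + (i : ℚ)))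
        * ∏ i ∈ Finset.range k, (1 / 2 - (m : ℚ) + i) := by
    rw [← Finset.prod_mul_distrib, ← Finset.prod_mul_distrib]
    apply Finset.prod_congr rfl
    intro i _
    push_cast
    ring
  rw [div_mul_div_comm, mul_comm ((k.factorial : ℚ))]
  congr 1
  rw [← e1, ← mul_assoc]
  rw [mul_right_comm, e2]
  ring
end

section
/- Let u, v ∈ ℂ and p ∈ ℂ with |p| = 1. The linear functional ω on H(S¹) ⊕ ℂ² defined by ⟨ω, (X(z), X_v, X_u)⟩ = e^{−u}p² X_{≥1}(p) + X(p) + e^{−u}p² X_v + p X_u (that is, ω_z(X) = e^{−u}p² X_{≥1}(p) + X(p), ω_v = e^{−u}p², ω_u = p·⟨ω_z,1⟩ = p) satisfies the generalized eigenvalue equation ⟨ω, 𝒰(X̂)⟩ = (v + 2e^u/p)⟨ω, X̂⟩ for all X̂ ∈ H(S¹) ⊕ ℂ², where 𝒰(X̂) = ((v + 2e^u z^{−1})X(z) + 2e^u X_u, 2e^u X₁ + v X_v, 2X_v + v X_u). -/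
open Metric

/-- The `k`-th Laurent coefficient of a function holomorphic near the unit circle. -/
noncomputable def laurentCoeff (f : ℂ → ℂ) (k : ℤ) : ℂ :=
  (2 * Real.pi * Complex.I)⁻¹ * ∮ z in C(0, 1), f z * z ^ (-(k + 1))

section aux
variable {r R : ℝ} {X : ℂ → ℂ}

lemma circleIntegrable_const_mul {f : ℂ → ℂ} {c : ℂ} {ρ : ℝ}
    (hf : CircleIntegrable f c ρ) (a : ℂ) : CircleIntegrable (fun z => a * f z) c ρ :=
  IntervalIntegrable.const_mul hf a

lemma circleIntegral_add' {f g : ℂ → ℂ} {c : ℂ} {ρ : ℝ}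
    (hf : CircleIntegrable f c ρ) (hg : CircleIntegrable g c ρ) :
    (∮ z in C(c, ρ), (f z + g z)) = (∮ z in C(c, ρ), f z) + ∮ z in C(c, ρ), g z := by
  simp only [circleIntegral, smul_add]
  exact intervalIntegral.integral_add hf.out hg.out

lemma sphere_subset_annulus {ρ : ℝ} (h1 : r < ρ) (h2 : ρ < R) :
    sphere (0:ℂ) ρ ⊆ {z : ℂ | r < ‖z‖ ∧ ‖z‖ < R} := by
  intro z hz
  simp only [mem_sphere_iff_norm, sub_zero] at hz
  have : ‖z‖ = ρ := by rw [hz]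
  exact ⟨by rw [this]; exact h1, by rw [this]; exact h2⟩

lemma integrable_aux (hr1 : r < 1) (hR : 1 < R)
    (hX : AnalyticOnNhd ℂ X {z : ℂ | r < ‖z‖ ∧ ‖z‖ < R}) (n : ℤ) :
    CircleIntegrable (fun z => X z * z ^ n) 0 1 := by
  apply ContinuousOn.circleIntegrable zero_le_one
  have hsub := sphere_subset_annulus hr1 hR
  apply ContinuousOn.mul (hX.continuousOn.mono hsub)
  intro z hz
  have hz0 : z ≠ 0 := by
    intro h; rw [h] at hz; simp at hz
  exact ((differentiableAt_id.zpow (Or.inl hz0)).continuousAt).continuousWithinAt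

lemma laurentCoeff_op (hr1 : r < 1) (hR : 1 < R)
    (hX : AnalyticOnNhd ℂ X {z : ℂ | r < ‖z‖ ∧ ‖z‖ < R})
    (v E C : ℂ) (m : ℤ) (hm : 1 ≤ m) :
    laurentCoeff (fun z => (v + 2 * E / z) * X z + C) m
      = v * laurentCoeff X m + 2 * E * laurentCoeff X (m + 1) := by
  have h1 := integrable_aux hr1 hR hX (-(m+1))
  have h2 := integrable_aux hr1 hR hX (-(m+2))
  have hCint : CircleIntegrable (fun z : ℂ => C * (z - 0) ^ (-(m+1))) 0 1 := by
    apply ContinuousOn.circleIntegrable zero_le_one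
    apply continuousOn_const.mul
    intro z hz
    have hz0 : z - 0 ≠ 0 := by intro h; rw [sub_zero] at h; rw [h] at hz; simp at hz
    exact ((((differentiableAt_id (x := z)).sub_const (0:ℂ)).zpow (m := -(m+1)) (Or.inl hz0)).continuousAt).continuousWithinAt
  have e1 : Set.EqOn (fun z => ((v + 2 * E / z) * X z + C) * z ^ (-(m+1)))
      (fun z => (v * (X z * z ^ (-(m+1))) + 2 * E * (X z * z ^ (-(m+2))))
        + C * (z - 0) ^ (-(m+1))) (sphere (0:ℂ) 1) := by
    intro z hz
    have hz0 : z ≠ 0 := by intro h; rw [h] at hz; simp at hz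
    have hzz : z ^ (-(m+2)) = z ^ (-(m+1)) * z⁻¹ := by
      rw [← zpow_neg_one, ← zpow_add₀ hz0]; congr 1; ring
    simp only [sub_zero, hzz, div_eq_mul_inv]
    ring
  have hne : -(m+1) ≠ -1 := by omega
  unfold laurentCoeff
  rw [circleIntegral.integral_congr zero_le_one e1]
  rw [circleIntegral_add'
      (f := fun z => v * (X z * z ^ (-(m+1))) + 2 * E * (X z * z ^ (-(m+2))))
      (g := fun z => C * (z - 0) ^ (-(m+1)))
      ((circleIntegrable_const_mul h1 v).add (circleIntegrable_const_mul h2 (2 * E))) hCint]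
  rw [circleIntegral_add' (circleIntegrable_const_mul h1 v)
      (circleIntegrable_const_mul h2 (2 * E))]
  rw [circleIntegral.integral_const_mul, circleIntegral.integral_const_mul,
    circleIntegral.integral_const_mul, circleIntegral.integral_sub_zpow_of_ne hne]
  rw [show (-(m + 2) : ℤ) = -(m + 1 + 1) from by ring]
  ring

lemma summable_coeff_norm (hr : 0 < r) (hr1 : r < 1) (hR : 1 < R)
    (hX : AnalyticOnNhd ℂ X {z : ℂ | r < ‖z‖ ∧ ‖z‖ < R}) :
    Summable (fun k : ℕ => ‖laurentCoeff X ((k : ℤ) + 1)‖) := by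
  set ρ : ℝ := (1 + R) / 2 with hρdef
  have hρ1 : 1 < ρ := by simp only [hρdef]; linarith
  have hρR : ρ < R := by simp only [hρdef]; linarith
  have hρ0 : (0:ℝ) < ρ := by linarith
  -- deform contour
  have hdeform : ∀ n : ℤ, (∮ z in C(0, 1), X z * z ^ n) = ∮ z in C(0, ρ), X z * z ^ n := by
    intro n
    refine (Complex.circleIntegral_eq_of_differentiable_on_annulus_off_countable one_pos hρ1.le
      Set.countable_empty ?_ ?_).symm
    · intro z hz
      have hzA : z ∈ {z : ℂ | r < ‖z‖ ∧ ‖z‖ < R} := by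
        obtain ⟨hz1, hz2⟩ := hz
        simp only [mem_closedBall, Complex.dist_eq, sub_zero, mem_ball, not_lt] at hz1 hz2
        exact ⟨lt_of_lt_of_le hr1 (by simpa using hz2), lt_of_le_of_lt (by simpa using hz1) hρR⟩
      have hz0 : z ≠ 0 := by
        intro h; rw [h] at hzA; simp at hzA; linarith [hzA.1]
      exact ((hX z hzA).differentiableAt.mul
        (differentiableAt_id.zpow (Or.inl hz0))).continuousAt.continuousWithinAt
    · intro z hz
      obtain ⟨⟨hz1, hz2⟩, -⟩ := hz
      have hzA : z ∈ {z : ℂ | r < ‖z‖ ∧ ‖z‖ < R} := by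
        simp only [mem_ball, Complex.dist_eq, sub_zero, mem_closedBall, not_le] at hz1 hz2
        exact ⟨lt_trans hr1 (by simpa using hz2), lt_trans (by simpa using hz1) hρR⟩
      have hz0 : z ≠ 0 := by
        intro h; rw [h] at hzA; simp at hzA; linarith [hzA.1]
      exact (hX z hzA).differentiableAt.mul (differentiableAt_id.zpow (Or.inl hz0))
  -- bound on sphere ρ
  obtain ⟨M, hM⟩ := (isCompact_sphere (0:ℂ) ρ).exists_bound_of_continuousOn
    (hX.continuousOn.mono (sphere_subset_annulus (lt_trans hr1 hρ1) hρR))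
  have hM0 : 0 ≤ M := le_trans (norm_nonneg _) (hM ρ (by simp [abs_of_pos hρ0]))
  have hbound : ∀ m : ℤ, ‖laurentCoeff X m‖ ≤ M * ρ ^ (-m) := by
    intro m
    have hint : ‖∮ z in C(0, ρ), X z * z ^ (-(m+1))‖
        ≤ 2 * Real.pi * ρ * (M * ρ ^ (-(m+1))) := by
      apply circleIntegral.norm_integral_le_of_norm_le_const hρ0.le
      intro z hz
      have hzn : ‖z‖ = ρ := by simpa using hz
      rw [norm_mul, norm_zpow, hzn]
      exact mul_le_mul_of_nonneg_right (hM z hz) (zpow_nonneg hρ0.le _)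
    unfold laurentCoeff
    rw [norm_mul, hdeform]
    have h2pi : ‖(2 * ↑Real.pi * Complex.I)⁻¹‖ = (2 * Real.pi)⁻¹ := by
      simp [norm_inv, abs_of_pos Real.two_pi_pos, Real.pi_pos.le]
    calc ‖(2 * ↑Real.pi * Complex.I)⁻¹‖ * ‖∮ z in C(0, ρ), X z * z ^ (-(m+1))‖
        ≤ (2 * Real.pi)⁻¹ * (2 * Real.pi * ρ * (M * ρ ^ (-(m+1)))) := by
          rw [h2pi]
          exact mul_le_mul_of_nonneg_left hint (by positivity)
      _ = M * ρ ^ (-m) := by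
          have hzz : ρ ^ (-(m+1)) = ρ ^ (-m) * ρ⁻¹ := by
            rw [← zpow_neg_one, ← zpow_add₀ (ne_of_gt hρ0)]
            congr 1; ring
          rw [hzz, show (2*Real.pi)⁻¹ * (2*Real.pi*ρ*(M*(ρ^(-m)*ρ⁻¹)))
              = ((2*Real.pi)*(2*Real.pi)⁻¹)*(ρ*ρ⁻¹)*(M*ρ^(-m)) from by ring,
            mul_inv_cancel₀ Real.two_pi_pos.ne', mul_inv_cancel₀ hρ0.ne', one_mul, one_mul]
  have hgeo : Summable (fun k : ℕ => (M * ρ⁻¹) * (ρ⁻¹) ^ k) :=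
    (summable_geometric_of_lt_one (by positivity) (inv_lt_one_of_one_lt₀ hρ1)).mul_left _
  refine Summable.of_nonneg_of_le (fun k => norm_nonneg _) (fun k => ?_) hgeo
  calc ‖laurentCoeff X ((k : ℤ) + 1)‖ ≤ M * ρ ^ (-((k:ℤ) + 1)) := hbound _
    _ = (M * ρ⁻¹) * (ρ⁻¹) ^ k := by
        rw [zpow_neg, ← inv_zpow, zpow_add₀ (by positivity : (ρ:ℝ)⁻¹ ≠ 0),
          zpow_natCast, zpow_one]
        ring

end aux

/-- The linear functional
`⟨ω, (X, X_v, X_u)⟩ = e^{-u} p² X_{≥1}(p) + X(p) + e^{-u} p² X_v + p X_u`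
is a generalized eigenvector of the operator `𝒰` at the special point with generalized
eigenvalue `v + 2 e^u / p`, for `|p| = 1`:
`⟨ω, 𝒰(X̂)⟩ = (v + 2 e^u / p) ⟨ω, X̂⟩` for all `X̂ = (X, X_v, X_u)`. -/
theorem omega_is_generalized_eigenvector
    (u v p : ℂ) (hp : ‖p‖ = 1)
    (r R : ℝ) (hr : 0 < r) (hr1 : r < 1) (hR : 1 < R)
    (X : ℂ → ℂ) (Xv Xu : ℂ)
    (hX : AnalyticOnNhd ℂ X {z : ℂ | r < ‖z‖ ∧ ‖z‖ < R}) :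
    (fun (Y : ℂ → ℂ) (Yv Yu : ℂ) =>
        Complex.exp (-u) * p ^ 2 * (∑' k : ℕ, laurentCoeff Y ((k : ℤ) + 1) * p ^ (k + 1))
          + Y p + Complex.exp (-u) * p ^ 2 * Yv + p * Yu)
      (fun z => (v + 2 * Complex.exp u / z) * X z + 2 * Complex.exp u * Xu)
      (2 * Complex.exp u * laurentCoeff X 1 + v * Xv)
      (2 * Xv + v * Xu)
    = (v + 2 * Complex.exp u / p) *
      (fun (Y : ℂ → ℂ) (Yv Yu : ℂ) =>
        Complex.exp (-u) * p ^ 2 * (∑' k : ℕ, laurentCoeff Y ((k : ℤ) + 1) * p ^ (k + 1))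
          + Y p + Complex.exp (-u) * p ^ 2 * Yv + p * Yu) X Xv Xu := by
  have hp0 : p ≠ 0 := by
    intro h; rw [h] at hp; simp at hp
  set E := Complex.exp u with hE
  have hsum : Summable (fun k : ℕ => laurentCoeff X ((k : ℤ) + 1) * p ^ (k + 1)) := by
    apply Summable.of_norm
    have : ∀ k : ℕ, ‖laurentCoeff X ((k : ℤ) + 1) * p ^ (k + 1)‖
        = ‖laurentCoeff X ((k : ℤ) + 1)‖ := by
      intro k
      rw [norm_mul, norm_pow, show ‖p‖ = 1 from by rw [hp],
        one_pow, mul_one]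
    exact (summable_coeff_norm hr hr1 hR hX).congr (fun k => (this k).symm)
  have hsum2 : Summable (fun k : ℕ => laurentCoeff X ((k : ℤ) + 2) * p ^ (k + 2)) := by
    have h := (summable_nat_add_iff 1).2 hsum
    exact h.congr (fun k => by push_cast; ring_nf)
  set S := ∑' k : ℕ, laurentCoeff X ((k : ℤ) + 1) * p ^ (k + 1) with hS
  have hshift : ∑' k : ℕ, laurentCoeff X ((k : ℤ) + 2) * p ^ (k + 2)
      = S - laurentCoeff X 1 * p := by
    have h0 := Summable.tsum_eq_zero_add hsum
    have h1 : ∑' k : ℕ, laurentCoeff X (((k + 1 : ℕ) : ℤ) + 1) * p ^ ((k + 1) + 1)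
        = ∑' k : ℕ, laurentCoeff X ((k : ℤ) + 2) * p ^ (k + 2) :=
      tsum_congr (fun k => by push_cast; ring_nf)
    rw [← h1]
    simp only [Nat.cast_zero, zero_add, pow_one] at h0
    rw [← hS] at h0
    linear_combination -h0
  have hY : ∀ k : ℕ, laurentCoeff
      (fun z => (v + 2 * E / z) * X z + 2 * E * Xu) ((k : ℤ) + 1)
      = v * laurentCoeff X ((k : ℤ) + 1) + 2 * E * laurentCoeff X ((k : ℤ) + 2) := by
    intro k
    have := laurentCoeff_op hr1 hR hX v E (2 * E * Xu) ((k : ℤ) + 1) (by omega)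
    rw [this]
    ring_nf
  have hT : ∑' k : ℕ, laurentCoeff
      (fun z => (v + 2 * E / z) * X z + 2 * E * Xu) ((k : ℤ) + 1) * p ^ (k + 1)
      = v * S + (2 * E / p) * (S - laurentCoeff X 1 * p) := by
    have heq : ∀ k : ℕ, laurentCoeff
        (fun z => (v + 2 * E / z) * X z + 2 * E * Xu) ((k : ℤ) + 1) * p ^ (k + 1)
        = v * (laurentCoeff X ((k : ℤ) + 1) * p ^ (k + 1))
          + (2 * E / p) * (laurentCoeff X ((k : ℤ) + 2) * p ^ (k + 2)) := by
      intro k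
      rw [hY k]
      have : p ^ (k + 2) = p * p ^ (k + 1) := by ring
      rw [this]
      field_simp
    rw [tsum_congr heq, Summable.tsum_add (hsum.mul_left v) (hsum2.mul_left (2 * E / p)),
      tsum_mul_left, tsum_mul_left, ← hS, hshift]
  simp only []
  rw [hT, ← hS]
  have hEinv : Complex.exp (-u) * E = 1 := by
    rw [hE, ← Complex.exp_add]; simp
  field_simp
  linear_combination (-2 * p ^ 2 * Xv) * hEinv
end

section
/- For every natural number k and integer m, the coefficient identity Σ-free form of Lemma A.2 holds: C(−1/2, k)·C(m+k−1/2, 2k) = ((1/2)^{(k)} (m+1/2)^{(k)} (1/2−m)^{(k)}) / ((2k)! · k!), and consequently the formal power series Σ_k C(−1/2,k) C(m+k−1/2,2k) z^k converges for |z| < 4 and equals ₂F₁(1/2 − m, 1/2 + m; 1; z/4). -/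
/-- The generalized binomial coefficient `C(x, n) = x(x−1)⋯(x−n+1)/n!` over `ℂ`. -/
noncomputable def genBinomC (x : ℂ) (n : ℕ) : ℂ :=
  (∏ i ∈ Finset.range n, (x - i)) / n.factorial

/-- The Gauss hypergeometric series `₂F₁(a,b;c;z) = Σ_n (a)^{(n)}(b)^{(n)}/((c)^{(n)} n!) zⁿ`. -/
noncomputable def hyp2F1 (a b c z : ℂ) : ℂ :=
  ∑' n : ℕ, ((ascPochhammer ℂ n).eval a * (ascPochhammer ℂ n).eval b)
    / ((ascPochhammer ℂ n).eval c * (n.factorial : ℂ)) * z ^ n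

/-! Writing `C(x, n)` as a falling factorial over `n!`, `C(-1/2, k) = (-1)^k (1/2)^{(k)} / k!`, and
splitting the `2k` factors of the falling factorial of `m + k - 1/2` into two halves gives
`C(m + k - 1/2, 2k) = (-1)^k (m + 1/2)^{(k)} (1/2 - m)^{(k)} / (2k)!`. Since
`(2k)! = 4^k k! (1/2)^{(k)}`, the `k`-th term of the series is the `k`-th term of
`₂F₁(1/2 - m, 1/2 + m; 1; z/4)`. For integer `m` no parameter of this `₂F₁` is a non-positive
integer, so its radius of convergence is `1`. -/

open Polynomial Nat

theorem genBinomC_eq_descPochhammer (x : ℂ) (n : ℕ) :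
    genBinomC x n = (descPochhammer ℂ n).eval x / n ! := by
  rw [genBinomC, descPochhammer_eval_eq_prod_range]

theorem genBinomC_neg (x : ℂ) (n : ℕ) :
    genBinomC (-x) n = (-1) ^ n * (ascPochhammer ℂ n).eval x / n ! := by
  rw [genBinomC_eq_descPochhammer, ← neg_neg x, ascPochhammer_eval_neg_eq_descPochhammer, neg_neg,
    ← mul_assoc, ← mul_pow, neg_one_mul, neg_neg, one_pow, one_mul]

theorem descPochhammer_two_mul_eval_add {R : Type*} [CommRing R] (a : R) (k : ℕ) :
    (descPochhammer R (2 * k)).eval (a + k)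
      = (-1) ^ k * (ascPochhammer R k).eval (a + 1) * (ascPochhammer R k).eval (-a) := by
  rw [two_mul, ← descPochhammer_mul, eval_mul, eval_comp, descPochhammer_eval_eq_ascPochhammer,
    ascPochhammer_eval_neg_eq_descPochhammer, mul_right_comm, ← mul_assoc, ← mul_pow]
  simp only [eval_sub, eval_X, eval_natCast, add_sub_cancel_right]
  norm_num [mul_comm]

theorem genBinomC_add_sub_half_two_mul (x : ℂ) (k : ℕ) :
    genBinomC (x + k - 1 / 2) (2 * k)
      = (-1) ^ k * (ascPochhammer ℂ k).eval (x + 1 / 2)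
          * (ascPochhammer ℂ k).eval (1 / 2 - x) / (2 * k)! := by
  rw [genBinomC_eq_descPochhammer, show x + k - 1 / 2 = (x - 1 / 2) + k by ring,
    descPochhammer_two_mul_eval_add]
  ring_nf

theorem factorial_two_mul_eq_four_pow_mul_ascPochhammer_half {K : Type*} [Field K] [CharZero K]
    (k : ℕ) :
    ((2 * k)! : K) = 4 ^ k * k ! * (ascPochhammer K k).eval (1 / 2) := by
  induction k with
  | zero => simp
  | succ k ih =>
    rw [show 2 * (k + 1) = 2 * k + 1 + 1 by ring, factorial_succ, factorial_succ, factorial_succ,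
      ascPochhammer_succ_eval]
    push_cast [ih]
    ring

theorem intCast_add_half_ne_zero {K : Type*} [Field K] [CharZero K] (j : ℤ) :
    (j : K) + 1 / 2 ≠ 0 := by
  intro h
  have : ((2 * j + 1 : ℤ) : K) = 0 := by push_cast; linear_combination 2 * h
  have : 2 * j + 1 = 0 := by exact_mod_cast this
  omega

theorem genBinomC_neg_half_mul_genBinomC (x : ℂ) (k : ℕ) :
    genBinomC (-(1 / 2)) k * genBinomC (x + k - 1 / 2) (2 * k)
      = (ascPochhammer ℂ k).eval (1 / 2) * (ascPochhammer ℂ k).eval (x + 1 / 2)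
          * (ascPochhammer ℂ k).eval (1 / 2 - x) / ((2 * k)! * k !) := by
  have hsign : (-1 : ℂ) ^ k * (-1) ^ k = 1 := by rw [← mul_pow]; norm_num
  rw [genBinomC_neg, genBinomC_add_sub_half_two_mul]
  linear_combination (ascPochhammer ℂ k).eval (1 / 2) * (ascPochhammer ℂ k).eval (x + 1 / 2)
    * (ascPochhammer ℂ k).eval (1 / 2 - x) / ((2 * k)! * k !) * hsign

theorem ascPochhammer_eval_half_ne_zero {K : Type*} [Field K] [CharZero K] (k : ℕ) :
    (ascPochhammer K k).eval (1 / 2) ≠ 0 := by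
  rw [Ne, ascPochhammer_eval_eq_zero_iff]
  rintro ⟨n, -, hn⟩
  exact intCast_add_half_ne_zero (K := K) n (by rw [Int.cast_natCast, hn]; ring)

theorem genBinom_term_eq_hyp2F1_term (x : ℂ) (k : ℕ) (z : ℂ) :
    genBinomC (-(1 / 2)) k * genBinomC (x + k - 1 / 2) (2 * k) * z ^ k
      = (ascPochhammer ℂ k).eval (1 / 2 - x) * (ascPochhammer ℂ k).eval (1 / 2 + x)
          / ((ascPochhammer ℂ k).eval 1 * k !) * (z / 4) ^ k := by
  have hhalf : (ascPochhammer ℂ k).eval (1 / 2) ≠ 0 := ascPochhammer_eval_half_ne_zero k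
  rw [genBinomC_neg_half_mul_genBinomC, factorial_two_mul_eq_four_pow_mul_ascPochhammer_half,
    ascPochhammer_eval_one, add_comm (1 / 2 : ℂ), div_pow]
  field_simp

theorem summable_hyp2F1_term {a b c z : ℂ}
    (habc : ∀ n : ℕ, (n : ℂ) ≠ -a ∧ (n : ℂ) ≠ -b ∧ (n : ℂ) ≠ -c) (hz : ‖z‖ < 1) :
    Summable fun n : ℕ => (ascPochhammer ℂ n).eval a * (ascPochhammer ℂ n).eval b
      / ((ascPochhammer ℂ n).eval c * n !) * z ^ n := by
  have hz' : z ∈ Metric.eball 0 (ordinaryHypergeometricSeries ℂ a b c).radius := by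
    rw [ordinaryHypergeometricSeries_radius_eq_one ℂ a b c habc, Metric.mem_eball, edist_zero_right,
      ← ofReal_norm]
    exact ENNReal.ofReal_lt_one.mpr hz
  refine ((ordinaryHypergeometricSeries ℂ a b c).summable hz').congr fun n => ?_
  rw [ordinaryHypergeometricSeries_apply_eq, smul_eq_mul]
  field_simp

/-- Lemma A.2: the coefficient identity
`C(−1/2, k)·C(m+k−1/2, 2k) = ((1/2)^{(k)} (m+1/2)^{(k)} (1/2−m)^{(k)})/((2k)!·k!)`
holds for all `k`, and consequently the power series
`Σ_k C(−1/2,k) C(m+k−1/2,2k) z^k` converges for `|z| < 4` and equals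
`₂F₁(1/2 − m, 1/2 + m; 1; z/4)`. -/
theorem genBinom_series_eq_hypergeometric (m : ℤ) :
    (∀ k : ℕ,
      genBinomC (-(1 / 2)) k * genBinomC ((m : ℂ) + (k : ℂ) - 1 / 2) (2 * k)
        = ((ascPochhammer ℂ k).eval (1 / 2) * (ascPochhammer ℂ k).eval ((m : ℂ) + 1 / 2)
            * (ascPochhammer ℂ k).eval (1 / 2 - (m : ℂ)))
          / (((2 * k).factorial : ℂ) * (k.factorial : ℂ))) ∧
    ∀ z : ℂ, ‖z‖ < 4 →
      Summable (fun k : ℕ =>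
        genBinomC (-(1 / 2)) k * genBinomC ((m : ℂ) + (k : ℂ) - 1 / 2) (2 * k) * z ^ k) ∧
      (∑' k : ℕ,
          genBinomC (-(1 / 2)) k * genBinomC ((m : ℂ) + (k : ℂ) - 1 / 2) (2 * k) * z ^ k)
        = hyp2F1 (1 / 2 - (m : ℂ)) (1 / 2 + (m : ℂ)) 1 (z / 4) := by
  refine ⟨genBinomC_neg_half_mul_genBinomC m, fun z hz => ?_⟩
  have hz4 : ‖z / 4‖ < 1 := by rw [norm_div, RCLike.norm_ofNat]; linarith
  have hparams (n : ℕ) :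
      (n : ℂ) ≠ -(1 / 2 - m) ∧ (n : ℂ) ≠ -(1 / 2 + m) ∧ (n : ℂ) ≠ -1 :=
    ⟨fun h => intCast_add_half_ne_zero (n - m) (by push_cast; linear_combination h),
      fun h => intCast_add_half_ne_zero (n + m) (by push_cast; linear_combination h),
      fun h => Nat.cast_add_one_ne_zero n (by linear_combination h)⟩
  have hterm (k : ℕ) := genBinom_term_eq_hyp2F1_term m k z
  exact ⟨(summable_hyp2F1_term hparams hz4).congr fun k => (hterm k).symm,
    tsum_congr hterm⟩
end
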